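/- Let G be a finite group, α : G × G → ℂˣ a 2-cocycle such that the twisted group algebra ℂ^αG is a simple ring, and let N ⊴ G be a normal subgroup. Then the action of G/N on the set Irr(ℂ^αN) of isomorphism classes of simple ℂ^αN-modules, given by gN·[M] = [{}^{g}M], is transitive. In particular, all simple ℂ^αN-modules have the same dimension. -/

import Mathlib

/-- A 2-cocycle on `G` with values in `ℂˣ`. -/
def IsTwoCocycle {G : Type} [Group G] (α : G → G → ℂˣ) : Prop :=
  ∀ g h k : G, α g h * α (g * h) k = α h k * α g (h * k)

/-- A twisted group algebra `ℂ^αG`: a ℂ-algebra with a basis `u_g` of invertible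
elements satisfying `u_g * u_h = α g h • u_{gh}`. -/
structure TwistedGroupAlgebra (G : Type) [Group G] (α : G → G → ℂˣ) where
  carrier : Type
  [ringStr : Ring carrier]
  [algStr : Algebra ℂ carrier]
  u : G → carrierˣ
  basis : Module.Basis G ℂ carrier
  basis_eq : ∀ g : G, basis g = (u g : carrier)
  u_mul : ∀ g h : G, (u g : carrier) * (u h : carrier) = (α g h : ℂ) • (u (g * h) : carrier)

attribute [instance] TwistedGroupAlgebra.ringStr TwistedGroupAlgebra.algStr

namespace TwistedGroupAlgebra

variable {G : Type} [Group G] {α : G → G → ℂˣ}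

/-- The subalgebra `ℂ^αN ⊆ ℂ^αG` spanned by the `u_n`, `n ∈ N`. -/
def sub (A : TwistedGroupAlgebra G α) (N : Subgroup G) : Subalgebra ℂ A.carrier :=
  Algebra.adjoin ℂ ((fun g : G => (A.u g : A.carrier)) '' (N : Set G))

/-- The dimension over `ℂ` of a `ℂ^αN`-module. -/
noncomputable def dimC (A : TwistedGroupAlgebra G α) (N : Subgroup G) (M : Type)
    [AddCommGroup M] [Module (A.sub N) M] : ℕ :=
  Module.finrank ℂ (RestrictScalars ℂ (A.sub N) M)

/-- `TwistIso A N g M M'` says that `M'` is isomorphic to the twist `{}^{g}M` of the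
`ℂ^αN`-module `M`, i.e. there is an additive bijection `e : M' → M` with
`e (a • m') = (u_g⁻¹ a u_g) • e m'` for all `a ∈ ℂ^αN`. -/
def TwistIso (A : TwistedGroupAlgebra G α) (N : Subgroup G) (g : G)
    (M M' : Type) [AddCommGroup M] [Module (A.sub N) M]
    [AddCommGroup M'] [Module (A.sub N) M'] : Prop :=
  ∃ e : M' ≃+ M, ∀ (a : A.sub N) (m' : M')
    (h : (((A.u g)⁻¹ : A.carrierˣ) : A.carrier) * (a : A.carrier) * (A.u g : A.carrier) ∈
      A.sub N),
    e (a • m') =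
      (⟨(((A.u g)⁻¹ : A.carrierˣ) : A.carrier) * (a : A.carrier) * (A.u g : A.carrier), h⟩ :
        A.sub N) • e m'

/-- The action of `G/N` on isomorphism classes of simple `ℂ^αN`-modules is transitive. -/
def TransAction (A : TwistedGroupAlgebra G α) (N : Subgroup G) : Prop :=
  ∀ (M : Type) [AddCommGroup M] [Module (A.sub N) M]
    (M' : Type) [AddCommGroup M'] [Module (A.sub N) M'],
    IsSimpleModule (A.sub N) M → IsSimpleModule (A.sub N) M' →
    ∃ g : G, TwistIso A N g M M'

/-- The action of `G/N` on isomorphism classes of simple `ℂ^αN`-modules is free. -/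
def FreeAction (A : TwistedGroupAlgebra G α) (N : Subgroup G) : Prop :=
  ∀ (M : Type) [AddCommGroup M] [Module (A.sub N) M], IsSimpleModule (A.sub N) M →
    ∀ g : G, TwistIso A N g M M → g ∈ N

/-- The restriction of the cohomology class of `α` to the subgroup `N` is trivial. -/
def RestTrivial (α : G → G → ℂˣ) (N : Subgroup G) : Prop :=
  ∃ β : N → ℂˣ, ∀ n n' : N, α n n' = β n * β n' * (β (n * n'))⁻¹

end TwistedGroupAlgebra

/-!
Clifford theory for twisted group algebras. Write `B = ℂ^αN ⊆ A = ℂ^αG`. Left multiplication by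
`u_g` on an `A`-module is semilinear for the automorphism `b ↦ u_g b u_g⁻¹` of `B` (here normality
of `N` is used), so it carries simple `B`-submodules to simple ones, and for a nonzero
`B`-submodule `P` of a simple `A`-module the translates `u_g P` add up to an `A`-submodule, hence
to everything. Applied to a minimal left ideal `L` of the simple Artinian algebra `A` this makes
`L`, hence `A ≅ L^(ι)`, hence `B`, semisimple over `B`. Every simple `B`-module `M` then embeds in
the faithful module `L`; as `L = ∑ u_g M` is a sum of simple modules, any other simple `M' ⊆ L` is
isomorphic to one of the summands `u_g M ≅ {}^{g}M`.
-/

theorem IsSimpleRing.faithfulSMul {R M : Type*} [Ring R] [IsSimpleRing R] [AddCommGroup M]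
    [Module R M] [Nontrivial M] : FaithfulSMul R M := by
  obtain ⟨x, hx⟩ := exists_ne (0 : M)
  have : Nontrivial (AddMonoid.End M) := ⟨1, 0, fun h => hx (DFunLike.congr_fun h x)⟩
  exact ⟨fun h => RingHom.injective (Module.toAddMonoidEnd R M) (AddMonoidHom.ext h)⟩

theorem IsSemisimpleRing.exists_injective_of_faithfulSMul {R S : Type*} (M : Type*) [Ring R]
    [IsSemisimpleRing R] [AddCommGroup S] [Module R S] [FaithfulSMul R S] [AddCommGroup M]
    [Module R M] [IsSimpleModule R M] : ∃ f : M →ₗ[R] S, Function.Injective f := by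
  obtain ⟨I, ⟨e⟩⟩ := IsSemisimpleRing.exists_linearEquiv_ideal_of_isSimpleModule R M
  have : IsSimpleModule R I := .congr e.symm
  have := IsSimpleModule.nontrivial R I
  obtain ⟨x, hx⟩ := exists_ne (0 : I)
  obtain ⟨s, hs⟩ : ∃ s : S, (x : R) • s ≠ 0 := by
    by_contra! h
    exact hx (Subtype.ext (eq_of_smul_eq_smul fun s => (h s).trans (zero_smul R s).symm))
  let f := LinearMap.toSpanSingleton R S s ∘ₗ I.subtype
  refine ⟨f ∘ₗ e.toLinearMap, (f.injective_or_eq_zero.resolve_right fun hf => hs ?_).comp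
    e.injective⟩
  exact DFunLike.congr_fun hf x

namespace TwistedGroupAlgebra

variable {G : Type} [Group G] {α : G → G → ℂˣ} (A : TwistedGroupAlgebra G α)

instance [Finite G] : Module.Finite ℂ A.carrier :=
  Module.Finite.of_basis A.basis

theorem u_mul_u_eq_smul_u_mul_u (g h : G) :
    (A.u g : A.carrier) * A.u h =
      ((α g h : ℂ) * (α (g * h * g⁻¹) g : ℂ)⁻¹) • ((A.u (g * h * g⁻¹) : A.carrier) * A.u g) := by
  rw [A.u_mul, A.u_mul, inv_mul_cancel_right, mul_smul, inv_smul_smul₀ (Units.ne_zero _)]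

theorem u_mem_sub {N : Subgroup G} {n : G} (hn : n ∈ N) : (A.u n : A.carrier) ∈ A.sub N :=
  Algebra.subset_adjoin ⟨n, hn, rfl⟩

theorem unit_mul_mul_inv_mem_sub {N : Subgroup G} (v : A.carrierˣ)
    (hv : ∀ n ∈ N, (v : A.carrier) * A.u n * ↑v⁻¹ ∈ A.sub N) {x : A.carrier}
    (hx : x ∈ A.sub N) : (v : A.carrier) * x * ↑v⁻¹ ∈ A.sub N := by
  have : A.sub N ≤
      (A.sub N).comap (MulSemiringAction.toAlgHom ℂ A.carrier (ConjAct.toConjAct v)) :=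
    Algebra.adjoin_le <| by rintro _ ⟨n, hn, rfl⟩; exact hv n hn
  exact this hx

theorem smul_mem_of_forall_u_smul_mem [Fintype G] {V : Type} [AddCommGroup V]
    [Module A.carrier V] {N : Subgroup G} (p : Submodule (A.sub N) V)
    (hp : ∀ g, ∀ x ∈ p, (A.u g : A.carrier) • x ∈ p) (a : A.carrier) {x : V} (hx : x ∈ p) :
    a • x ∈ p := by
  rw [← A.basis.sum_repr a, Finset.sum_smul]
  refine p.sum_mem fun g _ => ?_
  rw [A.basis_eq, Algebra.smul_def, mul_smul]
  exact p.smul_mem (algebraMap ℂ (A.sub N) _) (hp g x hx)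

theorem TwistIso.dimC_eq {N : Subgroup G} {g : G} {M M' : Type} [AddCommGroup M]
    [Module (A.sub N) M] [AddCommGroup M'] [Module (A.sub N) M'] (h : TwistIso A N g M M') :
    dimC A N M = dimC A N M' := by
  obtain ⟨e, he⟩ := h
  let f : RestrictScalars ℂ (A.sub N) M' ≃+ RestrictScalars ℂ (A.sub N) M :=
    (RestrictScalars.addEquiv ℂ _ M').trans (e.trans (RestrictScalars.addEquiv ℂ _ M).symm)
  refine (f.toLinearEquiv fun c x => ?_).finrank_eq.symm
  have hc : ↑(A.u g)⁻¹ * ((algebraMap ℂ (A.sub N) c : A.sub N) : A.carrier) * A.u g =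
      algebraMap ℂ (A.sub N) c := by
    rw [Subalgebra.coe_algebraMap, mul_assoc, Algebra.commutes, Units.inv_mul_cancel_left]
  apply (RestrictScalars.addEquiv ℂ (A.sub N) M).injective
  simp only [f, AddEquiv.trans_apply, AddEquiv.apply_symm_apply,
    RestrictScalars.addEquiv_map_smul, he _ _ (hc ▸ Subtype.prop _)]
  congr 1
  exact Subtype.ext hc

section Normal

variable (N : Subgroup G) [N.Normal]

theorem u_mul_mul_u_inv_mem (g : G) {x : A.carrier} (hx : x ∈ A.sub N) :
    (A.u g : A.carrier) * x * ↑(A.u g)⁻¹ ∈ A.sub N := by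
  refine A.unit_mul_mul_inv_mem_sub _ (fun n hn => ?_) hx
  rw [u_mul_u_eq_smul_u_mul_u, smul_mul_assoc, Units.mul_inv_cancel_right]
  exact Subalgebra.smul_mem _ (A.u_mem_sub (Subgroup.Normal.conj_mem ‹_› n hn g)) _

theorem u_inv_mul_mul_u_mem (g : G) {x : A.carrier} (hx : x ∈ A.sub N) :
    ↑(A.u g)⁻¹ * x * (A.u g : A.carrier) ∈ A.sub N := by
  refine A.unit_mul_mul_inv_mem_sub (A.u g)⁻¹ (fun n hn => ?_) hx
  have key := A.u_mul_u_eq_smul_u_mul_u g (g⁻¹ * n * g)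
  rw [show g * (g⁻¹ * n * g) * g⁻¹ = n by group] at key
  have hc : (α g (g⁻¹ * n * g) : ℂ) * (α n g : ℂ)⁻¹ ≠ 0 := by simp
  have : (↑(A.u g)⁻¹ : A.carrier) * A.u n * ↑(A.u g)⁻¹⁻¹ =
      ((α g (g⁻¹ * n * g) : ℂ) * (α n g : ℂ)⁻¹)⁻¹ • (A.u (g⁻¹ * n * g) : A.carrier) := by
    rw [inv_inv, mul_assoc, ← inv_smul_smul₀ hc ((A.u n : A.carrier) * A.u g), ← key,
      mul_smul_comm, Units.inv_mul_cancel_left]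
  rw [this]
  exact Subalgebra.smul_mem _ (A.u_mem_sub (Subgroup.Normal.conj_mem' ‹_› n hn g)) _

def conj (g : G) : A.sub N ≃+* A.sub N where
  toFun b := ⟨A.u g * b * ↑(A.u g)⁻¹, A.u_mul_mul_u_inv_mem N g b.2⟩
  invFun b := ⟨↑(A.u g)⁻¹ * b * A.u g, A.u_inv_mul_mul_u_mem N g b.2⟩
  left_inv b := Subtype.ext <| by simp [mul_assoc]
  right_inv b := Subtype.ext <| by simp [mul_assoc]
  map_mul' a b := Subtype.ext <| by simp [mul_assoc]
  map_add' a b := Subtype.ext <| by simp [mul_add, add_mul]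

attribute [local instance] RingHomInvPair.of_ringEquiv

theorem twistIso_of_linearEquiv {M M' : Type} [AddCommGroup M] [Module (A.sub N) M]
    [AddCommGroup M'] [Module (A.sub N) M'] {g : G}
    (e : M' ≃ₛₗ[((A.conj N g).symm : A.sub N →+* A.sub N)] M) : TwistIso A N g M M' :=
  ⟨e.toAddEquiv, fun a m' _ => e.map_smulₛₗ a m'⟩

variable (V : Type) [AddCommGroup V] [Module A.carrier V]

def uSmul (g : G) : V →ₛₗ[(A.conj N g : A.sub N →+* A.sub N)] V where
  toFun v := (A.u g : A.carrier) • v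
  map_add' := smul_add _
  map_smul' b v := by
    change _ • ((b : A.carrier) • v) = (_ * _ * _ : A.carrier) • _
    rw [← mul_smul, ← mul_smul, Units.inv_mul_cancel_right]

theorem uSmul_bijective (g : G) : Function.Bijective (A.uSmul N V g) :=
  MulAction.bijective (A.u g)

theorem isSimpleModule_map_uSmul (g : G) (p : Submodule (A.sub N) V)
    [hp : IsSimpleModule (A.sub N) p] : IsSimpleModule (A.sub N) (p.map (A.uSmul N V g)) :=
  isSimpleModule_iff_isAtom.mpr <|
    (Submodule.orderIsoMapComapOfBijective _ (A.uSmul_bijective N V g)).isAtom_iff p |>.mpr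
      (isSimpleModule_iff_isAtom.mp hp)

theorem u_smul_mem_map_uSmul (h g : G) {p : Submodule (A.sub N) V} {x : V}
    (hx : x ∈ p.map (A.uSmul N V g)) :
    (A.u h : A.carrier) • x ∈ p.map (A.uSmul N V (h * g)) := by
  obtain ⟨m, hm, rfl⟩ := hx
  refine ⟨algebraMap ℂ (A.sub N) (α h g) • m, p.smul_mem _ hm, ?_⟩
  change (A.u (h * g) : A.carrier) • (algebraMap ℂ A.carrier (α h g)) • m =
    (A.u h : A.carrier) • (A.u g : A.carrier) • m
  rw [← mul_smul, ← mul_smul, A.u_mul, ← Algebra.commutes, ← Algebra.smul_def]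

theorem iSup_map_uSmul_eq_top [Fintype G] [IsSimpleModule A.carrier V]
    {p : Submodule (A.sub N) V} (hp : p ≠ ⊥) : ⨆ g, p.map (A.uSmul N V g) = ⊤ := by
  set q := ⨆ g, p.map (A.uSmul N V g)
  have hq : ∀ h, ∀ x ∈ q, (A.u h : A.carrier) • x ∈ q := fun h x hx => by
    refine Submodule.iSup_induction _ (motive := fun x => (A.u h : A.carrier) • x ∈ q) hx
      (fun g x hx => Submodule.mem_iSup_of_mem _ (A.u_smul_mem_map_uSmul N V h g hx)) ?_ ?_
    · rw [smul_zero]; exact q.zero_mem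
    · intro x y hx hy; rw [smul_add]; exact q.add_mem hx hy
  let qA : Submodule A.carrier V :=
    { q.toAddSubmonoid with smul_mem' := fun a _ hx => A.smul_mem_of_forall_u_smul_mem q hq a hx }
  obtain ⟨x, hx, hx0⟩ := Submodule.exists_mem_ne_zero_of_ne_bot hp
  have hqA : qA = ⊤ := (eq_bot_or_eq_top qA).resolve_left fun hbot => by
    have : (A.u 1 : A.carrier) • x ∈ qA := Submodule.mem_iSup_of_mem 1 ⟨x, hx, rfl⟩
    rw [hbot, Submodule.mem_bot] at this
    exact hx0 ((MulAction.bijective (A.u 1)).injective (this.trans (smul_zero _).symm))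
  exact eq_top_iff.mpr fun y _ => (hqA ▸ Submodule.mem_top : y ∈ qA)

theorem isSemisimpleModule_sub_of_isSimpleModule [Fintype G] [IsSimpleModule A.carrier V]
    [IsArtinian (A.sub N) V] : IsSemisimpleModule (A.sub N) V := by
  have := IsSimpleModule.nontrivial A.carrier V
  obtain ⟨p, hp⟩ := IsAtomic.exists_atom (Submodule (A.sub N) V)
  have := isSimpleModule_iff_isAtom.mpr hp
  exact isSemisimpleModule_of_isSemisimpleModule_submodule'
    (fun g => have := A.isSimpleModule_map_uSmul N V g p; inferInstance)
    (A.iSup_map_uSmul_eq_top N V hp.1)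

theorem isSemisimpleRing_sub [Fintype G] [IsSimpleRing A.carrier] :
    IsSemisimpleRing (A.sub N) := by
  have := IsArtinianRing.of_finite ℂ A.carrier
  obtain ⟨ι, -, L, hL, ⟨e⟩⟩ := (IsSimpleRing.isIsotypic A.carrier A.carrier).linearEquiv_finsupp
  have : IsArtinian (A.sub N) L := isArtinian_of_tower ℂ inferInstance
  have := A.isSemisimpleModule_sub_of_isSimpleModule N L
  have : IsSemisimpleModule (A.sub N) A.carrier := .congr (e.restrictScalars (A.sub N))
  exact .of_injective
    { toFun := Subtype.val, map_add' := fun _ _ => rfl, map_smul' := fun _ _ => rfl }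
    Subtype.val_injective

theorem exists_twistIso_of_injective [Fintype G] [IsSimpleModule A.carrier V]
    {M M' : Type} [AddCommGroup M] [Module (A.sub N) M] [AddCommGroup M'] [Module (A.sub N) M']
    [IsSimpleModule (A.sub N) M] [IsSimpleModule (A.sub N) M']
    {ψ : M →ₗ[A.sub N] V} (hψ : Function.Injective ψ)
    {ψ' : M' →ₗ[A.sub N] V} (hψ' : Function.Injective ψ') : ∃ g, TwistIso A N g M M' := by
  have hP : IsSimpleModule (A.sub N) (LinearMap.range ψ) :=
    .congr (LinearEquiv.ofInjective ψ hψ).symm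
  have : IsSimpleModule (A.sub N) (LinearMap.range ψ') :=
    .congr (LinearEquiv.ofInjective ψ' hψ').symm
  let X : G → Submodule (A.sub N) V := fun g => (LinearMap.range ψ).map (A.uSmul N V g)
  have : ∀ P : Set.range X, IsSimpleModule (A.sub N) P := by
    rintro ⟨_, g, rfl⟩; exact A.isSimpleModule_map_uSmul N V g _
  obtain ⟨_, ⟨g, rfl⟩, ⟨e⟩⟩ := (LinearMap.range ψ').linearEquiv_of_le_sSup (Set.range X) <| by
    rw [sSup_range, A.iSup_map_uSmul_eq_top N V (isSimpleModule_iff_isAtom.mp hP).1]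
    exact le_top
  refine ⟨g, A.twistIso_of_linearEquiv N ?_⟩
  exact ((LinearEquiv.ofInjective ψ' hψ').trans e).trans
    ((LinearEquiv.ofInjective ψ hψ).trans
      (Submodule.equivMapOfInjective _ (A.uSmul_bijective N V g).injective _)).symm

theorem transAction_of_isSimpleRing [Fintype G] [IsSimpleRing A.carrier] : TransAction A N := by
  intro M _ _ M' _ _ _ _
  have := A.isSemisimpleRing_sub N
  have := IsArtinianRing.of_finite ℂ A.carrier
  obtain ⟨L, hL⟩ := IsAtomic.exists_atom (Submodule A.carrier A.carrier)
  have := isSimpleModule_iff_isAtom.mpr hL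
  have := IsSimpleModule.nontrivial A.carrier L
  have := IsSimpleRing.faithfulSMul (R := A.carrier) (M := L)
  obtain ⟨ψ, hψ⟩ := IsSemisimpleRing.exists_injective_of_faithfulSMul (R := A.sub N) (S := L) M
  obtain ⟨ψ', hψ'⟩ := IsSemisimpleRing.exists_injective_of_faithfulSMul (R := A.sub N) (S := L) M'
  exact A.exists_twistIso_of_injective N L hψ hψ'

end Normal

end TwistedGroupAlgebra

open TwistedGroupAlgebra in
theorem stmt6_general {G : Type} [Group G] [Fintype G] (α : G → G → ℂˣ)
    (A : TwistedGroupAlgebra G α) (hA : IsSimpleRing A.carrier)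
    (N : Subgroup G) [N.Normal] :
    TransAction A N ∧
    ∀ (M : Type) [AddCommGroup M] [Module (A.sub N) M]
      (M' : Type) [AddCommGroup M'] [Module (A.sub N) M'],
      IsSimpleModule (A.sub N) M → IsSimpleModule (A.sub N) M' →
        dimC A N M = dimC A N M' := by
  have htrans := A.transAction_of_isSimpleRing N
  refine ⟨htrans, fun M _ _ M' _ _ hM hM' => ?_⟩
  obtain ⟨g, hg⟩ := htrans M M' hM hM'
  exact hg.dimC_eq

open TwistedGroupAlgebra in
/-- If `ℂ^αG` is a simple ring and `N ⊴ G`, then the action of `G/N`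
on isomorphism classes of simple `ℂ^αN`-modules (by `gN • [M] = [{}^gM]`) is
transitive; in particular all simple `ℂ^αN`-modules have the same dimension. -/
theorem stmt6 {G : Type} [Group G] [Fintype G] (α : G → G → ℂˣ) (hα : IsTwoCocycle α)
    (A : TwistedGroupAlgebra G α) (hA : IsSimpleRing A.carrier)
    (N : Subgroup G) [N.Normal] :
    TransAction A N ∧
    ∀ (M : Type) [AddCommGroup M] [Module (A.sub N) M]
      (M' : Type) [AddCommGroup M'] [Module (A.sub N) M'],
      IsSimpleModule (A.sub N) M → IsSimpleModule (A.sub N) M' →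
        dimC A N M = dimC A N M' :=
  stmt6_general α A hA N
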